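/- arXiv:1205.6142 — 2 statements merged into one kernel-verified Lean document; each statement's English description precedes it below -/
import Mathlib

section
/- Let d, n_1, n_2, n_3 be the parameters of a circulant minor of C_n^k isomorphic to C_{n'}^{k'} (so n_1·n = k·n_2 + (k+1)·n_3, n' = n − d(n_2+n_3), k' = k − d·n_1, with 2 ≤ k' ≤ n'−2), and let r be such that 1 ≤ r ≤ k'−1 and n' ≡ r (mod k'). Then ⌈n'/k'⌉ > ⌈n/k⌉ if and only if d·n_3 ≥ k·r. -/
/-- Relevance criterion for circulant minors: with the parameters of a circulant minor of
`C_n^k` isomorphic to `C_{n'}^{k'}`, and `n' ≡ r (mod k')` with `1 ≤ r ≤ k'-1`,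
one has `⌈n'/k'⌉ > ⌈n/k⌉` if and only if `d·n_3 ≥ k·r`. -/
theorem relevant_minor_iff (n k n' k' d n1 n2 n3 r : ℕ)
    (hd : 0 < d) (hn1 : 0 < n1)
    (h2 : 2 ≤ k) (hk : k ≤ n - 2)
    (hpar : n1 * n = k * n2 + (k + 1) * n3)
    (hn' : n' + d * (n2 + n3) = n)
    (hk' : k' + d * n1 = k)
    (h2' : 2 ≤ k') (hk'' : k' ≤ n' - 2)
    (hr1 : 1 ≤ r) (hr2 : r ≤ k' - 1) (hmod : n' % k' = r) :
    (n + k - 1) / k < (n' + k' - 1) / k' ↔ k * r ≤ d * n3 := by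
  have hkpos : 0 < k := by omega
  have hk'pos : 0 < k' := by omega
  set q' := n' / k' with hq'
  have hdm : k' * q' + r = n' := by
    rw [← hmod, hq']; exact Nat.div_add_mod n' k'
  have key : k * n' = k' * n + d * n3 := by
    zify at hpar hn' hk' ⊢
    linear_combination (k : ℤ) * hn' - (n : ℤ) * hk' + (d : ℤ) * hpar
  have hceil : (n' + k' - 1) / k' = q' + 1 := by
    have he : n' + k' - 1 = k' * (q' + 1) + (r - 1) := by
      have : k' * (q' + 1) = k' * q' + k' := by ring
      omega
    rw [he, Nat.mul_add_div hk'pos]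
    have : (r - 1) / k' = 0 := Nat.div_eq_of_lt (by omega)
    omega
  rw [hceil, Nat.div_lt_iff_lt_mul hkpos]
  have heq : k' * (k * q') + k * r = k' * n + d * n3 := by
    have h1 : k' * (k * q') + k * r = k * (k' * q' + r) := by ring
    rw [h1, hdm, key]
  have h2e : (q' + 1) * k = k * q' + k := by ring
  constructor
  · intro h
    have hn_le : n ≤ k * q' := by omega
    have : k' * n ≤ k' * (k * q') := Nat.mul_le_mul (le_refl k') hn_le
    omega
  · intro h
    have hle : k' * n ≤ k' * (k * q') := by omega
    have hn_le : n ≤ k * q' := Nat.le_of_mul_le_mul_left hle hk'pos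
    omega
end

section
/- Let W ⊆ Z_n define a circulant minor of C_n^k isomorphic to C_{n'}^{k'} via a contraction set N with W = {i ∈ N : i−(k+1) ∈ N}. Then every cover x of C_n^k satisfies 2·Σ_{i∈W} x_i + Σ_{i∉W} x_i ≥ ⌈n'/k'⌉. -/
/-- The window `C^i = {i, i+1, ..., i+k-1}` in `Z_n`. -/
def window (n k : ℕ) (i : ZMod n) : Finset (ZMod n) :=
  (Finset.range k).image (fun j : ℕ => i + (j : ZMod n))

/-- A cover of the circulant matrix `C_n^k`: a subset of `Z_n` meeting every window. -/
def IsCover (n k : ℕ) (x : Finset (ZMod n)) : Prop :=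
  ∀ i : ZMod n, ∃ j ∈ x, j ∈ window n k i

/-- `N ⊆ Z_n` induces `d` disjoint simple dicycles in the digraph `G(C_n^k)`, each with
`n_2` arcs of length `k` and `n_3` arcs of length `k+1`. -/
def InducesDicycles (n k d n2 n3 : ℕ) [NeZero n] [NeZero (n2 + n3)]
    (N : Finset (ZMod n)) : Prop :=
  ∃ c : Fin d → ZMod (n2 + n3) → ZMod n,
    (∀ j, Function.Injective (c j)) ∧
    (∀ j j', j ≠ j' → ∀ a b, c j a ≠ c j' b) ∧
    (∀ j a, c j (a + 1) - c j a = (k : ZMod n) ∨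
      c j (a + 1) - c j a = (k : ZMod n) + 1) ∧
    (∀ j, (Finset.univ.filter
      (fun a : ZMod (n2 + n3) => c j (a + 1) - c j a = (k : ZMod n) + 1)).card = n3) ∧
    (∀ x : ZMod n, x ∈ N ↔ ∃ j a, c j a = x)

section Helpers

variable {n k : ℕ} [NeZero n]

lemma mem_window_iff (hkn : k < n) {i j : ZMod n} :
    j ∈ window n k i ↔ (j - i).val < k := by
  constructor
  · intro h
    simp only [window, Finset.mem_image, Finset.mem_range] at h
    obtain ⟨t, ht, rfl⟩ := h
    rw [add_sub_cancel_left, ZMod.val_natCast_of_lt (ht.trans hkn)]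
    exact ht
  · intro h
    simp only [window, Finset.mem_image, Finset.mem_range]
    exact ⟨(j - i).val, h, by rw [ZMod.natCast_val, ZMod.cast_id]; ring⟩

lemma card_window (hkn : k < n) (i : ZMod n) : (window n k i).card = k := by
  rw [window, Finset.card_image_of_injOn, Finset.card_range]
  intro t1 h1 t2 h2 h
  simp only [Finset.coe_range, Set.mem_Iio] at h1 h2
  have h3 : (t1 : ZMod n) = (t2 : ZMod n) := add_left_cancel h
  have h4 := congrArg ZMod.val h3
  rwa [ZMod.val_natCast_of_lt (h1.trans hkn), ZMod.val_natCast_of_lt (h2.trans hkn)] at h4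

/-- The key per-dicycle counting lemma: the number of dicycle points in the window
starting at `i`, plus the correction term (1 iff `i + k` is the head of a long arc of
the dicycle), equals `n1`, the winding number. -/
lemma dicycle_count {n1 n2 n3 : ℕ} [NeZero (n2 + n3)]
    (hkn : k + 2 ≤ n)
    (hpar : n1 * n = k * n2 + (k + 1) * n3)
    (c : ZMod (n2 + n3) → ZMod n)
    (hstep : ∀ a, c (a + 1) - c a = (k : ZMod n) ∨ c (a + 1) - c a = (k : ZMod n) + 1)
    (hlong : (Finset.univ.filter
      (fun a : ZMod (n2 + n3) => c (a + 1) - c a = (k : ZMod n) + 1)).card = n3)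
    (i : ZMod n) :
    (Finset.univ.filter (fun a : ZMod (n2 + n3) => c a ∈ window n k i)).card
    + (Finset.univ.filter (fun a : ZMod (n2 + n3) =>
        c (a + 1) - c a = (k : ZMod n) + 1 ∧ c (a + 1) = i + (k : ZMod n))).card = n1 := by
  have hn : 0 < n := Nat.pos_of_ne_zero (NeZero.ne n)
  set r : ZMod (n2 + n3) → ℕ := fun a => (c a - i).val with hr
  set s : ZMod (n2 + n3) → ℕ := fun a =>
    if c (a + 1) - c a = (k : ZMod n) + 1 then k + 1 else k with hs
  have hsval : ∀ a, ((s a : ℕ) : ZMod n) = c (a + 1) - c a := by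
    intro a
    by_cases h : c (a + 1) - c a = (k : ZMod n) + 1
    · rw [show s a = k + 1 from by simp [hs, h], h]
      push_cast
      ring
    · rw [show s a = k from by simp [hs, h], ((hstep a).resolve_right h)]
  have hslt : ∀ a, s a < n := by
    intro a
    by_cases h : c (a + 1) - c a = (k : ZMod n) + 1
    · rw [show s a = k + 1 from by simp [hs, h]]; omega
    · rw [show s a = k from by simp [hs, h]]; omega
  have hsk : ∀ a, s a = k ∨ s a = k + 1 := by
    intro a
    by_cases h : c (a + 1) - c a = (k : ZMod n) + 1
    · right; simp [hs, h]
    · left; simp [hs, h]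
  have hrlt : ∀ a, r a < n := fun a => ZMod.val_lt _
  set w : ZMod (n2 + n3) → ℕ := fun a => (r a + s a) / n with hw
  have key : ∀ a, r (a + 1) + n * w a = r a + s a := by
    intro a
    have h1 : c (a + 1) - i = (c a - i) + ((s a : ℕ) : ZMod n) := by rw [hsval]; ring
    have h2 : r (a + 1) = (r a + s a) % n := by
      show (c (a + 1) - i).val = ((c a - i).val + s a) % n
      rw [h1, ZMod.val_add, ZMod.val_natCast_of_lt (hslt a)]
    rw [h2]
    show (r a + s a) % n + n * ((r a + s a) / n) = r a + s a
    exact Nat.mod_add_div _ _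
  have wle : ∀ a, w a ≤ 1 := by
    intro a
    have h1 := hrlt a
    have h2 := hslt a
    have h3 : w a < 2 := by
      show (r a + s a) / n < 2
      exact (Nat.div_lt_iff_lt_mul hn).2 (by omega)
    omega
  have hshift : ∑ a : ZMod (n2 + n3), r (a + 1) = ∑ a : ZMod (n2 + n3), r a :=
    Fintype.sum_equiv (Equiv.addRight (1 : ZMod (n2 + n3))) _ _ (fun a => rfl)
  have hsum_s : ∑ a : ZMod (n2 + n3), s a = k * (n2 + n3) + n3 := by
    have h1 : ∀ a : ZMod (n2 + n3), s a
        = k + (if c (a + 1) - c a = (k : ZMod n) + 1 then 1 else 0) := by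
      intro a
      by_cases h : c (a + 1) - c a = (k : ZMod n) + 1 <;> simp [hs, h]
    calc ∑ a : ZMod (n2 + n3), s a
        = ∑ a : ZMod (n2 + n3), (k + (if c (a + 1) - c a = (k : ZMod n) + 1 then 1 else 0)) :=
          Finset.sum_congr rfl (fun a _ => h1 a)
      _ = k * (n2 + n3) + n3 := by
          rw [Finset.sum_add_distrib, Finset.sum_const, ← Finset.card_filter, hlong,
            Finset.card_univ, ZMod.card, smul_eq_mul, mul_comm]
  have hsum_w : ∑ a : ZMod (n2 + n3), w a = n1 := by
    have h3 : ∑ a : ZMod (n2 + n3), (r (a + 1) + n * w a)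
        = ∑ a : ZMod (n2 + n3), (r a + s a) :=
      Finset.sum_congr rfl (fun a _ => key a)
    rw [Finset.sum_add_distrib, Finset.sum_add_distrib, hshift, ← Finset.mul_sum] at h3
    have h4 : n * ∑ a : ZMod (n2 + n3), w a = k * (n2 + n3) + n3 := by
      have := Nat.add_left_cancel h3
      rw [this, hsum_s]
    have h5 : k * (n2 + n3) + n3 = n * n1 := by rw [mul_comm n n1, hpar]; ring
    exact Nat.eq_of_mul_eq_mul_left hn (by rw [h4, h5])
  have hiff : ∀ a, w a = 1 ↔ (r (a + 1) < k ∨ (r (a + 1) = k ∧ s a = k + 1)) := by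
    intro a
    have h1 := key a
    have h3 := hrlt a
    have h4 := hrlt (a + 1)
    have h5 := hsk a
    have h2 : w a = 0 ∨ w a = 1 := by have := wle a; omega
    rcases h2 with h2 | h2 <;> rw [h2] at h1 <;>
      simp only [Nat.mul_zero, Nat.add_zero, Nat.mul_one] at h1 <;> rw [h2] <;> omega
  have hcount : ∑ a : ZMod (n2 + n3), w a
      = (Finset.univ.filter (fun a : ZMod (n2 + n3) => w a = 1)).card := by
    rw [Finset.card_filter]
    refine Finset.sum_congr rfl (fun a _ => ?_)
    have := wle a
    by_cases h : w a = 1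
    · simp [h]
    · simp only [h, if_false]; omega
  have hsplit : (Finset.univ.filter (fun a : ZMod (n2 + n3) => w a = 1)).card
      = (Finset.univ.filter (fun a : ZMod (n2 + n3) => r (a + 1) < k)).card
      + (Finset.univ.filter (fun a : ZMod (n2 + n3) => r (a + 1) = k ∧ s a = k + 1)).card := by
    rw [Finset.filter_congr (fun a _ => hiff a), Finset.filter_or,
      Finset.card_union_of_disjoint]
    rw [Finset.disjoint_left]
    intro a ha hb
    simp only [Finset.mem_filter] at ha hb
    omega
  have hreindex : (Finset.univ.filter (fun a : ZMod (n2 + n3) => r (a + 1) < k)).card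
      = (Finset.univ.filter (fun a : ZMod (n2 + n3) => r a < k)).card := by
    refine Finset.card_bij (fun a _ => a + 1) ?_ ?_ ?_
    · intro a ha
      simp only [Finset.mem_filter, Finset.mem_univ, true_and] at ha ⊢
      exact ha
    · intro a1 _ a2 _ h
      exact add_right_cancel h
    · intro b hb
      simp only [Finset.mem_filter, Finset.mem_univ, true_and] at hb ⊢
      exact ⟨b - 1, by simpa using hb, by ring⟩
  have hval_k : ((k : ZMod n)).val = k := ZMod.val_natCast_of_lt (by omega)
  have hsecond : Finset.univ.filter (fun a : ZMod (n2 + n3) => r (a + 1) = k ∧ s a = k + 1)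
      = Finset.univ.filter (fun a : ZMod (n2 + n3) =>
          c (a + 1) - c a = (k : ZMod n) + 1 ∧ c (a + 1) = i + (k : ZMod n)) := by
    refine Finset.filter_congr (fun a _ => ?_)
    have hsiff : s a = k + 1 ↔ c (a + 1) - c a = (k : ZMod n) + 1 := by
      by_cases h : c (a + 1) - c a = (k : ZMod n) + 1
      · simp [hs, h]
      · simp only [hs, h, if_false, iff_false]
        omega
    have hriff : r (a + 1) = k ↔ c (a + 1) = i + (k : ZMod n) := by
      constructor
      · intro h
        have h1 : c (a + 1) - i = ((r (a + 1) : ℕ) : ZMod n) := by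
          show c (a + 1) - i = (((c (a + 1) - i).val : ℕ) : ZMod n)
          rw [ZMod.natCast_val, ZMod.cast_id]
        rw [h] at h1
        rw [← sub_eq_iff_eq_add']
        exact h1
      · intro h
        show (c (a + 1) - i).val = k
        rw [h, add_sub_cancel_left, hval_k]
    rw [hsiff, hriff]
    tauto
  have hfirst : Finset.univ.filter (fun a : ZMod (n2 + n3) => c a ∈ window n k i)
      = Finset.univ.filter (fun a : ZMod (n2 + n3) => r a < k) :=
    Finset.filter_congr (fun a _ => mem_window_iff (by omega))
  rw [hfirst, ← hsecond, ← hreindex, ← hsplit, ← hcount, hsum_w]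

end Helpers

/-- The minor inequality: if `W` arises from a circulant minor of `C_n^k` isomorphic to
`C_{n'}^{k'}`, every cover `x` of `C_n^k` satisfies
`2·Σ_{i∈W} x_i + Σ_{i∉W} x_i ≥ ⌈n'/k'⌉`. -/
theorem minor_inequality_valid (n k d n1 n2 n3 n' k' : ℕ) [NeZero n] [NeZero (n2 + n3)]
    (h2 : 2 ≤ k) (hk : k ≤ n - 2) (hd : 0 < d) (hn1 : 0 < n1)
    (hpar : n1 * n = k * n2 + (k + 1) * n3)
    (hn' : n' + d * (n2 + n3) = n) (hk' : k' + d * n1 = k)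
    (h2' : 2 ≤ k') (hk'' : k' ≤ n' - 2)
    (N : Finset (ZMod n)) (hN : InducesDicycles n k d n2 n3 N)
    (W : Finset (ZMod n)) (hW : W = N.filter (fun i => i - ((k : ZMod n) + 1) ∈ N)) :
    ∀ x : Finset (ZMod n), IsCover n k x →
      (n' + k' - 1) / k' ≤ 2 * (x ∩ W).card + (x \ W).card := by
  intro x hx
  have hn : 0 < n := Nat.pos_of_ne_zero (NeZero.ne n)
  have hkn : k + 2 ≤ n := by omega
  obtain ⟨c, hinj, hdisj, hstep, hlong, hmem⟩ := hN
  -- global injectivity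
  have hPinj : ∀ p q : Fin d × ZMod (n2 + n3), c p.1 p.2 = c q.1 q.2 → p = q := by
    rintro ⟨pj, pa⟩ ⟨qj, qa⟩ h
    by_cases hjq : pj = qj
    · subst hjq
      exact Prod.ext rfl (hinj pj h)
    · exact absurd h (hdisj pj qj hjq pa qa)
  -- |N| = d * (n2 + n3)
  have hNcard : N.card = d * (n2 + n3) := by
    have h1 : N = Finset.univ.image (fun p : Fin d × ZMod (n2 + n3) => c p.1 p.2) := by
      ext y
      simp only [Finset.mem_image, Finset.mem_univ, true_and, hmem]
      constructor
      · rintro ⟨j, a, h⟩; exact ⟨(j, a), h⟩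
      · rintro ⟨p, h⟩; exact ⟨p.1, p.2, h⟩
    rw [h1, Finset.card_image_of_injective _ (fun p q h => hPinj p q h),
      Finset.card_univ]
    simp [ZMod.card]
  -- the global counting lemma
  have hcountN : ∀ i : ZMod n,
      (N.filter (· ∈ window n k i)).card
      + (Finset.univ.filter (fun p : Fin d × ZMod (n2 + n3) =>
          c p.1 (p.2 + 1) - c p.1 p.2 = (k : ZMod n) + 1
          ∧ c p.1 (p.2 + 1) = i + (k : ZMod n))).card
      = d * n1 := by
    intro i
    have hA : (N.filter (· ∈ window n k i)).card
        = (Finset.univ.filter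
            (fun p : Fin d × ZMod (n2 + n3) => c p.1 p.2 ∈ window n k i)).card := by
      refine (Finset.card_bij (fun p _ => c p.1 p.2) ?_ ?_ ?_).symm
      · intro p hp
        simp only [Finset.mem_filter, Finset.mem_univ, true_and] at hp ⊢
        exact ⟨(hmem _).2 ⟨p.1, p.2, rfl⟩, hp⟩
      · intro p _ q _ h
        exact hPinj p q h
      · intro y hy
        simp only [Finset.mem_filter] at hy
        obtain ⟨j, a, h⟩ := (hmem y).1 hy.1
        refine ⟨(j, a), ?_, h⟩
        simp only [Finset.mem_filter, Finset.mem_univ, true_and]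
        rw [h]
        exact hy.2
    have hprod : ∀ (Q : Fin d × ZMod (n2 + n3) → Prop) [DecidablePred Q],
        (Finset.univ.filter Q).card
        = ∑ j : Fin d, (Finset.univ.filter (fun a : ZMod (n2 + n3) => Q (j, a))).card := by
      intro Q _
      rw [Finset.card_filter, Fintype.sum_prod_type]
      exact Finset.sum_congr rfl (fun j _ => (Finset.card_filter _ _).symm)
    rw [hA, hprod, hprod, ← Finset.sum_add_distrib]
    have h2 : ∀ j : Fin d,
        (Finset.univ.filter (fun a : ZMod (n2 + n3) => c j a ∈ window n k i)).card
        + (Finset.univ.filter (fun a : ZMod (n2 + n3) =>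
            c j (a + 1) - c j a = (k : ZMod n) + 1 ∧ c j (a + 1) = i + (k : ZMod n))).card
        = n1 := fun j => dicycle_count hkn hpar (c j) (hstep j) (hlong j) i
    rw [Finset.sum_congr rfl (fun j _ => h2 j), Finset.sum_const, Finset.card_univ,
      Fintype.card_fin, smul_eq_mul]
  -- the combined window-count statement
  have hwincard : ∀ j0 : ZMod n,
      (N.filter (· ∈ window n k (j0 - (k : ZMod n)))).card = d * n1
      ∨ ((N.filter (· ∈ window n k (j0 - (k : ZMod n)))).card + 1 = d * n1 ∧ j0 ∈ W) := by
    intro j0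
    have h5 := hcountN (j0 - (k : ZMod n))
    set E := (Finset.univ.filter (fun p : Fin d × ZMod (n2 + n3) =>
        c p.1 (p.2 + 1) - c p.1 p.2 = (k : ZMod n) + 1
        ∧ c p.1 (p.2 + 1) = (j0 - (k : ZMod n)) + (k : ZMod n))).card with hE
    have hE1 : E ≤ 1 := by
      rw [hE]
      refine Finset.card_le_one.2 ?_
      intro p hp q hq
      simp only [Finset.mem_filter, Finset.mem_univ, true_and] at hp hq
      have h6 := hPinj (p.1, p.2 + 1) (q.1, q.2 + 1) (by rw [hp.2, hq.2])
      injection h6 with h7 h8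
      exact Prod.ext h7 (add_right_cancel h8)
    rcases Nat.eq_zero_or_pos E with h9 | h9
    · left; omega
    · right
      refine ⟨by omega, ?_⟩
      have h10 : (Finset.univ.filter (fun p : Fin d × ZMod (n2 + n3) =>
          c p.1 (p.2 + 1) - c p.1 p.2 = (k : ZMod n) + 1
          ∧ c p.1 (p.2 + 1) = (j0 - (k : ZMod n)) + (k : ZMod n))).Nonempty := by
        rw [← Finset.card_pos, ← hE]; omega
      obtain ⟨p, hp⟩ := h10
      simp only [Finset.mem_filter, Finset.mem_univ, true_and] at hp
      have hj0 : c p.1 (p.2 + 1) = j0 := by rw [hp.2, sub_add_cancel]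
      rw [hW, Finset.mem_filter]
      refine ⟨(hmem _).2 ⟨p.1, p.2 + 1, hj0⟩, ?_⟩
      have h11 : j0 - ((k : ZMod n) + 1) = c p.1 p.2 := by
        rw [← hj0]
        linear_combination hp.1
      rw [h11]
      exact (hmem _).2 ⟨p.1, p.2, rfl⟩
  -- the certificate T = {p + 1 : p ∉ N}
  set T : Finset (ZMod n) := (Finset.univ \ N).image (· + 1) with hT
  have hTcard : T.card = n' := by
    rw [hT, Finset.card_image_of_injective _ (add_left_injective 1),
      Finset.card_sdiff_of_subset (Finset.subset_univ N), Finset.card_univ, ZMod.card, hNcard]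
    omega
  -- window flip helper
  have hflip : ∀ u : ZMod n, u.val < k → ((k : ZMod n) - 1 - u).val = k - 1 - u.val := by
    intro u hu
    have h1 : (k : ZMod n) - 1 - u = ((k - 1 - u.val : ℕ) : ZMod n) := by
      have h0 : k - 1 - u.val + (1 + u.val) = k := by omega
      have h3 := congrArg (fun t : ℕ => (t : ZMod n)) h0
      push_cast at h3
      have h4 : ((u.val : ℕ) : ZMod n) = u := by rw [ZMod.natCast_val, ZMod.cast_id]
      rw [h4] at h3
      linear_combination -h3
    rw [h1, ZMod.val_natCast_of_lt (by omega)]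
  have hmemflip : ∀ j0 p : ZMod n,
      (j0 ∈ window n k (p + 1)) ↔ p ∈ window n k (j0 - (k : ZMod n)) := by
    intro j0 p
    rw [mem_window_iff (show k < n by omega), mem_window_iff (show k < n by omega)]
    have hpe : p - (j0 - (k : ZMod n)) = (k : ZMod n) - 1 - (j0 - (p + 1)) := by ring
    constructor
    · intro h
      rw [hpe, hflip _ h]
      omega
    · intro h
      rw [hpe] at h
      have h5 := hflip _ h
      have h6 : (k : ZMod n) - 1 - ((k : ZMod n) - 1 - (j0 - (p + 1))) = j0 - (p + 1) := by
        ring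
      rw [h6] at h5
      omega
  -- the load bound
  have hload : ∀ j0 : ZMod n,
      (T.filter (fun i => j0 ∈ window n k i)).card ≤ k' + (if j0 ∈ W then k' else 0) := by
    intro j0
    have h1 : (T.filter (fun i => j0 ∈ window n k i)).card
        = ((Finset.univ \ N).filter (fun p => j0 ∈ window n k (p + 1))).card := by
      rw [hT, Finset.filter_image,
        Finset.card_image_of_injective _ (add_left_injective 1)]
    have h3 : (Finset.univ \ N).filter (fun p => j0 ∈ window n k (p + 1))
        = window n k (j0 - (k : ZMod n)) \ N := by
      ext p
      simp only [Finset.mem_filter, Finset.mem_sdiff, Finset.mem_univ, true_and]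
      rw [hmemflip]
      tauto
    have h4 : (window n k (j0 - (k : ZMod n)) \ N).card
        + (N.filter (· ∈ window n k (j0 - (k : ZMod n)))).card = k := by
      have hfm : N.filter (· ∈ window n k (j0 - (k : ZMod n)))
          = window n k (j0 - (k : ZMod n)) ∩ N := by
        ext y
        simp only [Finset.mem_filter, Finset.mem_inter]
        tauto
      rw [hfm, Finset.card_sdiff_add_card_inter, card_window (by omega)]
    rw [h1, h3]
    rcases hwincard j0 with h5 | ⟨h5, h6⟩
    · have : (window n k (j0 - (k : ZMod n)) \ N).card = k - d * n1 := by omega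
      rw [this]
      split <;> omega
    · simp only [h6, if_true]
      omega
  -- main chain
  have hchain : n' ≤ k' * x.card + k' * (x ∩ W).card := by
    have hstep1 : ∀ i ∈ T, 1 ≤ (x.filter (· ∈ window n k i)).card := by
      intro i _
      obtain ⟨j, hj, hjw⟩ := hx i
      exact Finset.card_pos.2 ⟨j, Finset.mem_filter.2 ⟨hj, hjw⟩⟩
    have h1 : T.card ≤ ∑ i ∈ T, (x.filter (· ∈ window n k i)).card := by
      rw [Finset.card_eq_sum_ones T]
      exact Finset.sum_le_sum hstep1
    have h2 : ∑ i ∈ T, (x.filter (· ∈ window n k i)).card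
        = ∑ j ∈ x, (T.filter (fun i => j ∈ window n k i)).card := by
      simp only [Finset.card_filter]
      exact Finset.sum_comm
    have h3 : ∑ j ∈ x, (T.filter (fun i => j ∈ window n k i)).card
        ≤ ∑ j ∈ x, (k' + if j ∈ W then k' else 0) :=
      Finset.sum_le_sum (fun j _ => hload j)
    have h4 : ∑ j ∈ x, (k' + if j ∈ W then k' else 0)
        = k' * x.card + k' * (x ∩ W).card := by
      rw [Finset.sum_add_distrib, Finset.sum_const, smul_eq_mul, mul_comm]
      congr 1
      have h5 : ∑ j ∈ x, (if j ∈ W then k' else 0) = ∑ j ∈ x.filter (· ∈ W), k' :=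
        (Finset.sum_filter _ _).symm
      rw [h5, Finset.sum_const, smul_eq_mul, Finset.filter_mem_eq_inter, mul_comm]
    calc n' = T.card := hTcard.symm
      _ ≤ ∑ i ∈ T, (x.filter (· ∈ window n k i)).card := h1
      _ = ∑ j ∈ x, (T.filter (fun i => j ∈ window n k i)).card := h2
      _ ≤ ∑ j ∈ x, (k' + if j ∈ W then k' else 0) := h3
      _ = k' * x.card + k' * (x ∩ W).card := h4
  -- final arithmetic
  have hxcard : (x ∩ W).card + (x \ W).card = x.card := Finset.card_inter_add_card_sdiff x W
  have hfin : n' ≤ k' * (2 * (x ∩ W).card + (x \ W).card) := by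
    calc n' ≤ k' * x.card + k' * (x ∩ W).card := hchain
      _ = k' * (x.card + (x ∩ W).card) := by ring
      _ = k' * (2 * (x ∩ W).card + (x \ W).card) := by
          congr 1
          omega
  have hk'pos : 0 < k' := by omega
  rw [← Nat.lt_succ_iff, Nat.div_lt_iff_lt_mul hk'pos]
  calc n' + k' - 1 < n' + k' := by omega
    _ ≤ k' * (2 * (x ∩ W).card + (x \ W).card) + k' := by
        exact Nat.add_le_add_right hfin k'
    _ = (2 * (x ∩ W).card + (x \ W).card + 1) * k' := by ring
end
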